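/- Define ★1 = {*L, *R} and ★n = {★(n-1),...,★1, *L, *R} for n > 1. For positive integers a_1,...,a_n, the sum ★a_1 + ... + ★a_n has outcome P if and only if a_1 ⊕ ... ⊕ a_n = 0, and outcome N otherwise, where ⊕ is bitwise XOR. -/

import Mathlib

/-- Positions of LR-ending partisan games: two terminals and finite option sets
(represented as lists; set-like behavior is captured by the `Iso` relation). -/
inductive Pos : Type
  | termL : Pos
  | termR : Pos
  | opts : List Pos → Pos

namespace Pos

/-- Valid positions: every non-terminal position has a nonempty set of options. -/
inductive Valid : Pos → Prop
  | termL : Valid termL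
  | termR : Valid termR
  | opts : ∀ gs : List Pos, gs ≠ [] → (∀ g ∈ gs, Valid g) → Valid (opts gs)

/-- Disjunctive sum. -/
def sum : Pos → Pos → Pos
  | termL, termL => termL
  | termL, termR => termR
  | termR, termL => termR
  | termR, termR => termL
  | termL, opts hs => opts (hs.attach.map (fun h => sum termL h.1))
  | termR, opts hs => opts (hs.attach.map (fun h => sum termR h.1))
  | opts gs, termL => opts (gs.attach.map (fun g => sum g.1 termL))
  | opts gs, termR => opts (gs.attach.map (fun g => sum g.1 termR))
  | opts gs, opts hs =>
      opts (gs.attach.map (fun g => sum g.1 (opts hs)) ++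
            hs.attach.map (fun h => sum (opts gs) h.1))
termination_by g h => sizeOf g + sizeOf h
decreasing_by
  all_goals
    first
      | (have := List.sizeOf_lt_of_mem h.2; simp_all; omega)
      | (have := List.sizeOf_lt_of_mem g.2; simp_all; omega)

/-- Conjugate: swap the two kinds of terminal positions. -/
def conj : Pos → Pos
  | termL => termR
  | termR => termL
  | opts gs => opts (gs.attach.map (fun g => conj g.1))
decreasing_by
  have := List.sizeOf_lt_of_mem g.2; simp_all; omega

/-- Isomorphism of game trees (positions viewed as sets of options). -/
def Iso : Pos → Pos → Prop
  | termL, termL => True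
  | termR, termR => True
  | opts gs, opts hs =>
      (∀ g ∈ gs.attach, ∃ h ∈ hs.attach, Iso g.1 h.1) ∧
      (∀ h ∈ hs.attach, ∃ g ∈ gs.attach, Iso g.1 h.1)
  | _, _ => False
termination_by g h => sizeOf g + sizeOf h
decreasing_by
  all_goals
    (have hg := List.sizeOf_lt_of_mem g.2; have hh := List.sizeOf_lt_of_mem h.2;
     simp_all; omega)

inductive Player : Type
  | left : Player
  | right : Player
  deriving DecidableEq

/-- `Wins p b G` : player `p` has a winning strategy from position `G`,
where `b = true` means it is `p`'s turn to move and `b = false` means the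
opponent is to move.  A terminal position is won by the player given by
its label, regardless of whose turn it is. -/
inductive Wins : Player → Bool → Pos → Prop
  | termL : ∀ b, Wins Player.left b termL
  | termR : ∀ b, Wins Player.right b termR
  | move : ∀ (p : Player) (gs : List Pos) (g : Pos), g ∈ gs →
      Wins p false g → Wins p true (opts gs)
  | wait : ∀ (p : Player) (gs : List Pos),
      (∀ g, g ∈ gs → Wins p true g) → Wins p false (opts gs)

inductive Outcome : Type
  | L : Outcome
  | R : Outcome
  | N : Outcome
  | P : Outcome
  deriving DecidableEq

/-- The outcome of a position. -/
noncomputable def outcome (G : Pos) : Outcome := by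
  classical
  exact
    if Wins Player.left true G then
      if Wins Player.left false G then Outcome.L else Outcome.N
    else
      if Wins Player.left false G then Outcome.P else Outcome.R

/-- Equivalence of positions: the outcome agrees in every (valid) context. -/
def equiv (G H : Pos) : Prop :=
  ∀ X : Pos, Valid X → outcome (sum G X) = outcome (sum H X)

end Pos
namespace Pos

mutual
/-- `Ln n` is the position `*L_n`: `*L_0 = *L`, `*L_n = {*L_{n-1}, ..., *L_0}`. -/
def Ln : ℕ → Pos
  | 0 => termL
  | n + 1 => opts (LnList (n + 1))
termination_by n => 2 * n + 1
/-- `LnList n = [*L_{n-1}, ..., *L_0]`. -/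
def LnList : ℕ → List Pos
  | 0 => []
  | n + 1 => Ln n :: LnList n
termination_by n => 2 * n
end

mutual
/-- `Rn n` is the position `*R_n`. -/
def Rn : ℕ → Pos
  | 0 => termR
  | n + 1 => opts (RnList (n + 1))
termination_by n => 2 * n + 1
def RnList : ℕ → List Pos
  | 0 => []
  | n + 1 => Rn n :: RnList n
termination_by n => 2 * n
end

/-- `kome n` is `✠_n = {*L_{n-1}, *R_{n-1}, ..., *L_0, *R_0}` (for `n ≥ 1`). -/
def kome (n : ℕ) : Pos := opts (LnList n ++ RnList n)

mutual
/-- `starAux n` represents `★(n+1)`: `★1 = {*L, *R}`, `★n = {★(n-1),...,★1,*L,*R}`. -/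
def starAux : ℕ → Pos
  | 0 => opts [termL, termR]
  | n + 1 => opts (starList (n + 1) ++ [termL, termR])
termination_by n => 2 * n + 1
/-- `starList n = [★n, ..., ★1]`. -/
def starList : ℕ → List Pos
  | 0 => []
  | n + 1 => starAux n :: starList n
termination_by n => 2 * n
end

/-- `bigstar n` is `★n` (meaningful for `n ≥ 1`). -/
def bigstar (n : ℕ) : Pos := starAux (n - 1)

/-- Sum of a list of positions (`*L` is the empty sum, and `G + *L = G`). -/
def sumList (l : List Pos) : Pos := l.foldr sum termL

/-- Nim-sum (XOR) of a list of naturals. -/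
def xorList (l : List ℕ) : ℕ := l.foldr (· ^^^ ·) 0

/-- Minimum excludant of a list of naturals. -/
noncomputable def mexList (l : List ℕ) : ℕ := sInf {n : ℕ | n ∉ l}

end Pos

/-!
`★n` behaves like a nim heap of size `n`: moving `★n` to `*L` deletes the heap, and moving it
to `*R` conjugates the rest of the sum, which is harmless because everything here is symmetric
in `L` and `R`. Give positions Grundy values (terminals have value `0`), with the proviso that a
position of nonzero value offers each player a move to value `0` other than the opponent's
terminal. Then values of sums are nim-sums, as in the Sprague–Grundy theorem, and a
non-terminal position is won by the second player exactly when its value is `0`.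
-/

namespace Pos

theorem sum_termL_left (X : Pos) : sum termL X = X := by
  match X with
  | termL => rw [sum]
  | termR => rw [sum]
  | opts hs =>
    rw [sum, List.map_congr_left fun h _ => sum_termL_left h.1]
    simp
termination_by sizeOf X
decreasing_by have := List.sizeOf_lt_of_mem h.2; simp_all; omega

theorem sum_termL_right (X : Pos) : sum X termL = X := by
  match X with
  | termL => rw [sum]
  | termR => rw [sum]
  | opts gs =>
    rw [sum, List.map_congr_left fun g _ => sum_termL_right g.1]
    simp
termination_by sizeOf X
decreasing_by have := List.sizeOf_lt_of_mem g.2; simp_all; omega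

theorem conj_opts (gs : List Pos) : conj (opts gs) = opts (gs.map conj) := by
  rw [conj, List.map_attach_eq_pmap, List.pmap_eq_map]

theorem sum_termR_left (X : Pos) : sum termR X = conj X := by
  match X with
  | termL => rw [sum, conj]
  | termR => rw [sum, conj]
  | opts hs =>
    rw [sum, conj_opts, List.map_congr_left fun h _ => sum_termR_left h.1]
    simp
termination_by sizeOf X
decreasing_by have := List.sizeOf_lt_of_mem h.2; simp_all; omega

theorem sum_termR_right (X : Pos) : sum X termR = conj X := by
  match X with
  | termL => rw [sum, conj]
  | termR => rw [sum, conj]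
  | opts gs =>
    rw [sum, conj_opts, List.map_congr_left fun g _ => sum_termR_right g.1]
    simp
termination_by sizeOf X
decreasing_by have := List.sizeOf_lt_of_mem g.2; simp_all; omega

theorem sum_opts_opts (gs hs : List Pos) :
    sum (opts gs) (opts hs) =
      opts (gs.map (sum · (opts hs)) ++ hs.map (sum (opts gs))) := by
  rw [sum]
  simp

theorem exists_sum_opts_left (gs : List Pos) (H : Pos) : ∃ ks, sum (opts gs) H = opts ks := by
  cases H <;> exact ⟨_, by rw [sum]⟩

theorem exists_sum_opts_right (G : Pos) (hs : List Pos) : ∃ ks, sum G (opts hs) = opts ks := by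
  cases G <;> exact ⟨_, by rw [sum]⟩

/-- Grundy values in the mex sense, where a move to value `0` must be available to each player
without landing on the opponent's terminal. -/
def HasGrundy : Pos → ℕ → Prop
  | termL, n => n = 0
  | termR, n => n = 0
  | opts gs, n =>
      (∀ g : {g // g ∈ gs}, ∃ m ≠ n, HasGrundy g m) ∧
      ∀ m < n, (∃ g : {g // g ∈ gs}, g.1 ≠ termR ∧ HasGrundy g m) ∧
        (∃ g : {g // g ∈ gs}, g.1 ≠ termL ∧ HasGrundy g m)
termination_by G => sizeOf G
decreasing_by all_goals (have := List.sizeOf_lt_of_mem g.2; simp_all; omega)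

theorem hasGrundy_termL {n : ℕ} : HasGrundy termL n ↔ n = 0 := by
  rw [HasGrundy]

theorem hasGrundy_termR {n : ℕ} : HasGrundy termR n ↔ n = 0 := by
  rw [HasGrundy]

theorem hasGrundy_opts {gs : List Pos} {n : ℕ} :
    HasGrundy (opts gs) n ↔
      (∀ g ∈ gs, ∃ m ≠ n, HasGrundy g m) ∧
      ∀ m < n, (∃ g ∈ gs, g ≠ termR ∧ HasGrundy g m) ∧ (∃ g ∈ gs, g ≠ termL ∧ HasGrundy g m) := by
  rw [HasGrundy]
  simp only [Subtype.forall, Subtype.exists, exists_prop]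

theorem Wins.not_opponent {p q : Player} {b : Bool} {G : Pos} (h : Wins p b G) (hpq : p ≠ q) :
    ¬ Wins q (!b) G := by
  intro h'
  induction h with
  | termL b => generalize (!b) = c at h'; cases h'; exact hpq rfl
  | termR b => generalize (!b) = c at h'; cases h'; exact hpq rfl
  | move p gs g hg _ ih => cases h' with
    | wait _ _ hall => exact ih hpq (hall g hg)
  | wait p gs _ ih => cases h' with
    | move _ _ g hg hw => exact ih g hg hpq hw

theorem wins_of_hasGrundy {gs : List Pos} {n : ℕ} (h : HasGrundy (opts gs) n) (p : Player) :
    (n ≠ 0 → Wins p true (opts gs)) ∧ (n = 0 → Wins p false (opts gs)) := by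
  obtain ⟨hopt, hlt⟩ := hasGrundy_opts.1 h
  constructor
  · intro hn
    obtain ⟨⟨g, hg, hgR, hg0⟩, ⟨g', hg', hg'L, hg'0⟩⟩ := hlt 0 (Nat.pos_of_ne_zero hn)
    cases p with
    | left =>
      refine Wins.move _ _ g hg ?_
      match g, hg0 with
      | termL, _ => exact Wins.termL false
      | termR, _ => exact absurd rfl hgR
      | opts hs, hg0 => exact (wins_of_hasGrundy hg0 _).2 rfl
    | right =>
      refine Wins.move _ _ g' hg' ?_
      match g', hg'0 with
      | termL, _ => exact absurd rfl hg'L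
      | termR, _ => exact Wins.termR false
      | opts hs, hg'0 => exact (wins_of_hasGrundy hg'0 _).2 rfl
  · rintro rfl
    refine Wins.wait _ _ fun g hg => ?_
    obtain ⟨m, hm, hgm⟩ := hopt g hg
    match g, hgm with
    | termL, hgm => exact absurd (hasGrundy_termL.1 hgm) hm
    | termR, hgm => exact absurd (hasGrundy_termR.1 hgm) hm
    | opts hs, hgm => exact (wins_of_hasGrundy hgm _).1 hm
termination_by sizeOf gs
decreasing_by all_goals (have := List.sizeOf_lt_of_mem ‹_ ∈ gs›; simp_all; omega)

theorem conj_eq_termL_iff {G : Pos} : conj G = termL ↔ G = termR := by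
  cases G <;> simp [conj]

theorem conj_eq_termR_iff {G : Pos} : conj G = termR ↔ G = termL := by
  cases G <;> simp [conj]

theorem HasGrundy.conj {G : Pos} {n : ℕ} (h : HasGrundy G n) : HasGrundy (conj G) n := by
  match G, h with
  | termL, h => rwa [Pos.conj, hasGrundy_termR, ← hasGrundy_termL]
  | termR, h => rwa [Pos.conj, hasGrundy_termL, ← hasGrundy_termR]
  | opts gs, h =>
    obtain ⟨hopt, hlt⟩ := hasGrundy_opts.1 h
    rw [conj_opts, hasGrundy_opts]
    refine ⟨?_, fun m hm => ?_⟩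
    · simp only [List.mem_map, forall_exists_index, and_imp, forall_apply_eq_imp_iff₂]
      intro g hg
      obtain ⟨m, hm, hgm⟩ := hopt g hg
      exact ⟨m, hm, hgm.conj⟩
    · obtain ⟨⟨g, hg, hgR, hgm⟩, ⟨g', hg', hg'L, hg'm⟩⟩ := hlt m hm
      exact ⟨⟨Pos.conj g', List.mem_map_of_mem hg', mt conj_eq_termR_iff.1 hg'L, hg'm.conj⟩,
        ⟨Pos.conj g, List.mem_map_of_mem hg, mt conj_eq_termL_iff.1 hgR, hgm.conj⟩⟩
termination_by sizeOf G
decreasing_by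
  all_goals simp_wf
  all_goals first
    | have := List.sizeOf_lt_of_mem hg; omega
    | have := List.sizeOf_lt_of_mem hg'; omega

theorem HasGrundy.sum {G H : Pos} {a b : ℕ} (hG : HasGrundy G a) (hH : HasGrundy H b) :
    HasGrundy (sum G H) (a ^^^ b) := by
  match G, H, hG, hH with
  | termL, H, hG, hH => rwa [sum_termL_left, hasGrundy_termL.1 hG, Nat.zero_xor]
  | termR, H, hG, hH => rw [sum_termR_left, hasGrundy_termR.1 hG, Nat.zero_xor]; exact hH.conj
  | opts gs, termL, hG, hH => rwa [sum_termL_right, hasGrundy_termL.1 hH, Nat.xor_zero]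
  | opts gs, termR, hG, hH =>
    rw [sum_termR_right, hasGrundy_termR.1 hH, Nat.xor_zero]; exact hG.conj
  | opts gs, opts hs, hG, hH =>
    obtain ⟨hGopt, hGlt⟩ := hasGrundy_opts.1 hG
    obtain ⟨hHopt, hHlt⟩ := hasGrundy_opts.1 hH
    rw [sum_opts_opts, hasGrundy_opts]
    refine ⟨?_, fun m hm => ?_⟩
    · simp only [List.mem_append, List.mem_map]
      rintro _ (⟨g, hg, rfl⟩ | ⟨h, hh, rfl⟩)
      · obtain ⟨a', ha', hga'⟩ := hGopt g hg
        exact ⟨a' ^^^ b, by simpa using ha', hga'.sum hH⟩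
      · obtain ⟨b', hb', hhb'⟩ := hHopt h hh
        exact ⟨a ^^^ b', by simpa using hb', hG.sum hhb'⟩
    · -- `m < a ^^^ b`, so lowering one summand as in nim realises the nim-sum `m`
      suffices ∃ x ∈ gs.map (Pos.sum · (opts hs)) ++ hs.map (Pos.sum (opts gs)),
          (∃ ks, x = opts ks) ∧ HasGrundy x m by
        obtain ⟨x, hx, ⟨ks, rfl⟩, hxm⟩ := this
        exact ⟨⟨_, hx, nofun, hxm⟩, ⟨_, hx, nofun, hxm⟩⟩
      rcases Nat.lt_xor_cases hm with ha | hb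
      · obtain ⟨g, hg, -, hga'⟩ := (hGlt _ ha).1
        refine ⟨_, List.mem_append_left _ (List.mem_map_of_mem hg), exists_sum_opts_right g hs, ?_⟩
        simpa using hga'.sum hH
      · obtain ⟨h, hh, -, hhb'⟩ := (hHlt _ hb).1
        refine ⟨_, List.mem_append_right _ (List.mem_map_of_mem hh),
          exists_sum_opts_left gs h, ?_⟩
        simpa [Nat.xor_comm a] using hG.sum hhb'
termination_by sizeOf G + sizeOf H
decreasing_by
  all_goals simp_wf
  all_goals first
    | have := List.sizeOf_lt_of_mem hg; omega
    | have := List.sizeOf_lt_of_mem hh; omega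

theorem starAux_eq (n : ℕ) : starAux n = opts (starList n ++ [termL, termR]) := by
  cases n with
  | zero => rw [starAux, starList]; rfl
  | succ n => rw [starAux]

theorem mem_starList {g : Pos} {n : ℕ} : g ∈ starList n ↔ ∃ k < n, g = starAux k := by
  induction n with
  | zero => simp [starList]
  | succ n ih =>
    rw [starList, List.mem_cons, ih]
    constructor
    · rintro (rfl | ⟨k, hk, rfl⟩)
      exacts [⟨n, n.lt_succ_self, rfl⟩, ⟨k, by omega, rfl⟩]
    · rintro ⟨k, hk, rfl⟩
      rcases Nat.lt_succ_iff_lt_or_eq.1 hk with hk | rfl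
      exacts [Or.inr ⟨k, hk, rfl⟩, Or.inl rfl]

theorem hasGrundy_starAux (n : ℕ) : HasGrundy (starAux n) (n + 1) := by
  induction n using Nat.strong_induction_on with
  | _ n ih =>
    rw [starAux_eq, hasGrundy_opts]
    simp only [List.mem_append, mem_starList, List.mem_cons, List.not_mem_nil, or_false]
    refine ⟨?_, fun m hm => ?_⟩
    · rintro g (⟨k, hk, rfl⟩ | rfl | rfl)
      exacts [⟨k + 1, by omega, ih k hk⟩, ⟨0, by omega, hasGrundy_termL.2 rfl⟩,
        ⟨0, by omega, hasGrundy_termR.2 rfl⟩]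
    · rcases m with _ | k
      · exact ⟨⟨termL, by simp, nofun, hasGrundy_termL.2 rfl⟩,
          ⟨termR, by simp, nofun, hasGrundy_termR.2 rfl⟩⟩
      · have hk : k < n := by omega
        exact ⟨⟨starAux k, Or.inl ⟨k, hk, rfl⟩, by rw [starAux_eq]; nofun, ih k hk⟩,
          ⟨starAux k, Or.inl ⟨k, hk, rfl⟩, by rw [starAux_eq]; nofun, ih k hk⟩⟩

theorem hasGrundy_bigstar {a : ℕ} (ha : 1 ≤ a) : HasGrundy (bigstar a) a := by
  simpa [bigstar, Nat.sub_add_cancel ha] using hasGrundy_starAux (a - 1)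

theorem hasGrundy_sumList_bigstar (as : List ℕ) (hpos : ∀ a ∈ as, 1 ≤ a) :
    HasGrundy (sumList (as.map bigstar)) (xorList as) := by
  induction as with
  | nil => exact hasGrundy_termL.2 rfl
  | cons a as ih =>
    simp only [List.mem_cons, forall_eq_or_imp] at hpos
    exact (hasGrundy_bigstar hpos.1).sum (ih hpos.2)

theorem exists_sumList_bigstar_eq_opts {as : List ℕ} (h : as ≠ []) :
    ∃ gs, sumList (as.map bigstar) = opts gs := by
  obtain ⟨a, as, rfl⟩ := List.exists_cons_of_ne_nil h
  show ∃ gs, sum (bigstar a) _ = opts gs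
  rw [bigstar, starAux_eq]
  exact exists_sum_opts_left _ _

theorem outcome_eq_P {G : Pos} (h : ∀ p, Wins p false G) : outcome G = Outcome.P := by
  have hL : ¬ Wins Player.left true G := fun hL => hL.not_opponent (q := .right) nofun (h _)
  simp [outcome, hL, h Player.left]

theorem outcome_eq_N {G : Pos} (h : ∀ p, Wins p true G) : outcome G = Outcome.N := by
  have hL : ¬ Wins Player.left false G := fun hL => hL.not_opponent (q := .right) nofun (h _)
  simp [outcome, hL, h Player.left]

end Pos

/-- `★a_1 + ⋯ + ★a_n` has outcome P iff `a_1 ⊕ ⋯ ⊕ a_n = 0`,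
and outcome N otherwise. -/
theorem bigstar_sum_outcome (as : List ℕ) (h : as ≠ []) (hpos : ∀ a ∈ as, 1 ≤ a) :
    (Pos.xorList as = 0 →
      Pos.outcome (Pos.sumList (as.map Pos.bigstar)) = Pos.Outcome.P) ∧
    (Pos.xorList as ≠ 0 →
      Pos.outcome (Pos.sumList (as.map Pos.bigstar)) = Pos.Outcome.N) := by
  obtain ⟨gs, hgs⟩ := Pos.exists_sumList_bigstar_eq_opts h
  have hG := Pos.hasGrundy_sumList_bigstar as hpos
  rw [hgs] at hG ⊢
  exact ⟨fun hx => Pos.outcome_eq_P fun p => (Pos.wins_of_hasGrundy hG p).2 hx,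
    fun hx => Pos.outcome_eq_N fun p => (Pos.wins_of_hasGrundy hG p).1 hx⟩
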